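/- Let n ≥ 1 be a natural number, 1 < p < q < p*(n), and 0 < ω < ω_{p,q}. Then ω < ω_{σ,τ,p,q}. -/

import Mathlib

/-- `σ = n/(p+1) - (n-2)/2`. -/
noncomputable def sigma (n : ℕ) (p : ℝ) : ℝ := n / (p + 1) - ((n : ℝ) - 2) / 2

/-- `τ = n/(q+1) - (n-2)/2`. -/
noncomputable def tau (n : ℕ) (q : ℝ) : ℝ := n / (q + 1) - ((n : ℝ) - 2) / 2

/-- The critical frequency `ω_{p,q}`. -/
noncomputable def omegaPQ (p q : ℝ) : ℝ :=
  (2 * (q - p) / ((p + 1) * (q - 1))) *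
    (((p - 1) * (q + 1)) / ((p + 1) * (q - 1))) ^ ((p - 1) / (q - p))

/-- The critical frequency `ω_{σ,τ,p,q}`. -/
noncomputable def omegaSig (n : ℕ) (p q : ℝ) : ℝ :=
  sigma n p * ((q - p) / (q - 1)) *
    ((sigma n p * (p - 1)) / (tau n q * (q - 1))) ^ ((p - 1) / (q - p))

/-!
With `a = σ(p+1)/2` and `b = τ(q+1)/2` one has
`ω_{σ,τ,p,q} = ω_{p,q} · a (a/b)^((p-1)/(q-p))`, and the correction factor is at least `1`
exactly when `b ^ ((p-1)/(q-1)) ≤ a`. Since `σ(p+1)/2 = 1 + (n-2)(1-p)/4` is affine in the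
exponent, this is Bernoulli's inequality `(1 + s) ^ λ ≤ 1 + λ s` for `λ = (p-1)/(q-1)`;
subcriticality `q < p*(n)` is what makes `b` positive.
-/

open Real

lemma tau_eq_sigma (n : ℕ) (q : ℝ) : tau n q = sigma n q := rfl

lemma sigma_mul_add_one_div_two (n : ℕ) {p : ℝ} (hp : p + 1 ≠ 0) :
    sigma n p * (p + 1) / 2 = 1 + ((n : ℝ) - 2) / 4 * (1 - p) := by
  unfold sigma
  field_simp
  ring

lemma sigma_pos {n : ℕ} {p : ℝ} (hp : -1 < p)
    (hsub : 3 ≤ n → p < ((n : ℝ) + 2) / ((n : ℝ) - 2)) : 0 < sigma n p := by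
  have hp1 : 0 < p + 1 := by linarith
  rcases le_or_gt 3 n with h3 | h2
  · suffices 0 < sigma n p * (p + 1) / 2 by nlinarith
    have h3' : (3 : ℝ) ≤ n := by exact_mod_cast h3
    have := (lt_div_iff₀ (by linarith)).1 (hsub h3)
    rw [sigma_mul_add_one_div_two n hp1.ne']
    nlinarith
  · unfold sigma
    interval_cases n <;> norm_num <;> positivity

lemma omegaPQ_pos {p q : ℝ} (hp : 1 < p) (hpq : p < q) : 0 < omegaPQ p q := by
  have : 0 < p + 1 := by linarith
  have : 0 < q + 1 := by linarith
  have : 0 < p - 1 := by linarith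
  have : 0 < q - 1 := by linarith
  have : 0 < q - p := by linarith
  unfold omegaPQ
  positivity

lemma one_le_mul_div_rpow {a b θ : ℝ} (hb : 0 < b) (hθ : 0 ≤ θ)
    (hab : b ^ (θ / (1 + θ)) ≤ a) : 1 ≤ a * (a / b) ^ θ := by
  have ha : 0 < a := (rpow_pos_of_pos hb _).trans_le hab
  have hb_pow : b ^ θ ≤ a ^ (1 + θ) := calc
    b ^ θ = (b ^ (θ / (1 + θ))) ^ (1 + θ) := by
      rw [← rpow_mul hb.le, div_mul_cancel₀ _ (by linarith)]
    _ ≤ a ^ (1 + θ) := rpow_le_rpow (rpow_nonneg hb.le _) hab (by linarith)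
  rw [div_rpow ha.le hb.le, ← mul_div_assoc, ← rpow_one_add' ha.le (by linarith),
    one_le_div (rpow_pos_of_pos hb _)]
  exact hb_pow

lemma omegaSig_eq_omegaPQ_mul {n : ℕ} {p q : ℝ} (hp : 1 < p) (hpq : p < q)
    (hσ : 0 < sigma n p) (hτ : 0 < tau n q) :
    omegaSig n p q = omegaPQ p q * (sigma n p * (p + 1) / 2 *
      (sigma n p * (p + 1) / 2 / (tau n q * (q + 1) / 2)) ^ ((p - 1) / (q - p))) := by
  have : 0 < p + 1 := by linarith
  have : 0 < q + 1 := by linarith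
  have : 0 < p - 1 := by linarith
  have : 0 < q - 1 := by linarith
  have : 0 < q - p := by linarith
  have hratio : sigma n p * (p - 1) / (tau n q * (q - 1)) =
      (p - 1) * (q + 1) / ((p + 1) * (q - 1)) *
        (sigma n p * (p + 1) / 2 / (tau n q * (q + 1) / 2)) := by
    field_simp
  unfold omegaSig omegaPQ
  rw [hratio, mul_rpow (by positivity) (by positivity)]
  field_simp

lemma sigma_mul_add_one_div_two_rpow_le {n : ℕ} {p q : ℝ} (hp : 1 < p) (hpq : p < q)
    (hσ : 0 < sigma n q) :
    (sigma n q * (q + 1) / 2) ^ ((p - 1) / (q - 1)) ≤ sigma n p * (p + 1) / 2 := by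
  have hq1 : 0 < q - 1 := by linarith
  have hb : 0 < sigma n q * (q + 1) / 2 := by nlinarith
  rw [sigma_mul_add_one_div_two n (by linarith)] at hb ⊢
  rw [sigma_mul_add_one_div_two n (by linarith)]
  calc (1 + ((n : ℝ) - 2) / 4 * (1 - q)) ^ ((p - 1) / (q - 1))
      ≤ 1 + (p - 1) / (q - 1) * (((n : ℝ) - 2) / 4 * (1 - q)) :=
        rpow_one_add_le_one_add_mul_self (by linarith) (div_nonneg (by linarith) hq1.le)
          ((div_le_one hq1).2 (by linarith))
    _ = 1 + ((n : ℝ) - 2) / 4 * (1 - p) := by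
        field_simp
        ring

lemma omegaPQ_le_omegaSig {n : ℕ} {p q : ℝ} (hp : 1 < p) (hpq : p < q)
    (hq : 3 ≤ n → q < ((n : ℝ) + 2) / ((n : ℝ) - 2)) :
    omegaPQ p q ≤ omegaSig n p q := by
  have hσ : 0 < sigma n p := sigma_pos (by linarith) fun h3 => hpq.trans (hq h3)
  have hτ : 0 < tau n q := sigma_pos (by linarith) hq
  have hqp : 0 < q - p := by linarith
  have hweight : (p - 1) / (q - p) / (1 + (p - 1) / (q - p)) = (p - 1) / (q - 1) := by
    rw [one_add_div hqp.ne', div_div_div_cancel_right₀ hqp.ne']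
    congr 1
    ring
  have hb : 0 < tau n q * (q + 1) / 2 := by nlinarith
  rw [omegaSig_eq_omegaPQ_mul hp hpq hσ hτ]
  refine le_mul_of_one_le_right (omegaPQ_pos hp hpq).le
    (one_le_mul_div_rpow hb (div_nonneg (by linarith) hqp.le) ?_)
  rw [hweight, tau_eq_sigma]
  exact sigma_mul_add_one_div_two_rpow_le hp hpq hτ

theorem omega_lt_omegaSig_general (p q ω : ℝ) (n : ℕ)
    (hp : 1 < p) (hpq : p < q)
    (hq : 3 ≤ n → q < ((n : ℝ) + 2) / ((n : ℝ) - 2))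
    (hωpq : ω < omegaPQ p q) :
    ω < omegaSig n p q :=
  hωpq.trans_le (omegaPQ_le_omegaSig hp hpq hq)

/-- For `n ≥ 1`, `1 < p < q < p*(n)` (the subcriticality condition is vacuous for
`n = 1, 2` where `p*(n) = ∞`) and `0 < ω < ω_{p,q}` we have `ω < ω_{σ,τ,p,q}`. -/
theorem omega_lt_omegaSig (p q ω : ℝ) (n : ℕ) (hn : 1 ≤ n)
    (hp : 1 < p) (hpq : p < q)
    (hq : 3 ≤ n → q < ((n : ℝ) + 2) / ((n : ℝ) - 2))
    (hω : 0 < ω) (hωpq : ω < omegaPQ p q) :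
    ω < omegaSig n p q :=
  omega_lt_omegaSig_general p q ω n hp hpq hq hωpq
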